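/- Fix a real number $q$ with $0 < q < 1$ and an integer $N \le 0$. Then the linear map $T_N : V_N \to V_{N-2}$ is surjective, and its kernel has $\mathbb{C}$-dimension $1 - N$ (i.e. $|N| + 1$), spanned by the basis vectors $e_{a,b}$ with $a = -N$. -/

import Mathlib

/-- The `q`-integer `[n] = (qⁿ - q⁻ⁿ)/(q - q⁻¹)`. -/
noncomputable def qint (q : ℝ) (n : ℤ) : ℝ :=
  (q ^ n - q ^ (-n)) / (q - q⁻¹)

/-- The index set `S_N = {(a,b) : a ≥ |N|, a ≡ N (mod 2), |b| ≤ a, b ≡ a (mod 2)}`. -/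
def SN (N : ℤ) : Set (ℤ × ℤ) :=
  {p | |N| ≤ p.1 ∧ p.1 % 2 = N % 2 ∧ |p.2| ≤ p.1 ∧ p.2 % 2 = p.1 % 2}

/-- `V_N`: the `ℂ`-vector space of finitely supported functions on `S_N`, with standard
basis `(e_{a,b})`. -/
abbrev VN (N : ℤ) : Type :=
  SN N →₀ ℂ

/-- The coefficient `√([ (a-N)/2 + 1 ] [ (a+N)/2 ])` of the Dolbeault operator. -/
noncomputable def coeffT (q : ℝ) (N : ℤ) (p : ℤ × ℤ) : ℝ :=
  Real.sqrt (qint q ((p.1 - N) / 2 + 1) * qint q ((p.1 + N) / 2))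

/-- The anti-holomorphic Dolbeault operator `T_N : V_N → V_{N-2}`,
`T_N e_{a,b} = √([ (a-N)/2 + 1 ] [ (a+N)/2 ]) e_{a,b}` if `(a,b) ∈ S_{N-2}`, and `0`
otherwise. -/
noncomputable def TN (q : ℝ) (N : ℤ) : VN N →ₗ[ℂ] VN (N - 2) :=
  Finsupp.lsum ℂ fun p : SN N =>
    letI := Classical.dec ((p : ℤ × ℤ) ∈ SN (N - 2))
    if h : (p : ℤ × ℤ) ∈ SN (N - 2) then
      ((coeffT q N p : ℝ) : ℂ) • Finsupp.lsingle (⟨(p : ℤ × ℤ), h⟩ : SN (N - 2))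
    else 0

/-!
For `N ≤ 1` we have `S_{N-2} ⊆ S_N`, and `T_N` restricts a function on `S_N` to `S_{N-2}` and
then multiplies it pointwise by the coefficients `√([(a-N)/2 + 1] [(a+N)/2])`. On `S_{N-2}` both
`q`-integers have positive argument, and `[n] > 0` for `n > 0` when `0 < q < 1`, so these
coefficients never vanish. A restriction along an injection followed by an invertible diagonal map
is surjective, and its kernel consists of the functions supported off the image: here the row
`a = -N` of `S_N`, which consists of the `1 - N` points `(-N, N + 2k)`, `0 ≤ k ≤ -N`.
-/

open Function

section DiagonalRestriction

variable {α β K : Type*} [Field K] {T : (α →₀ K) →ₗ[K] (β →₀ K)} {ι : β → α} {c : β → K}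

theorem LinearMap.surjective_of_apply_eq_mul_comp (hT : ∀ v b, T v b = c b * v (ι b))
    (hι : Injective ι) (hc : ∀ b, c b ≠ 0) : Surjective T := by
  intro w
  induction w using Finsupp.induction_linear with
  | zero => exact ⟨0, map_zero T⟩
  | add w₁ w₂ h₁ h₂ =>
    obtain ⟨v₁, rfl⟩ := h₁
    obtain ⟨v₂, rfl⟩ := h₂
    exact ⟨v₁ + v₂, map_add T v₁ v₂⟩
  | single b x =>
    refine ⟨Finsupp.single (ι b) ((c b)⁻¹ * x), Finsupp.ext fun b' => ?_⟩
    rw [hT, Finsupp.single_apply_left hι]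
    by_cases hb : b = b'
    · subst hb
      rw [Finsupp.single_eq_same, Finsupp.single_eq_same, mul_inv_cancel_left₀ (hc b)]
    · rw [Finsupp.single_eq_of_ne' hb, Finsupp.single_eq_of_ne' hb, mul_zero]

theorem LinearMap.ker_eq_supported_compl_range_of_apply_eq_mul_comp
    (hT : ∀ v b, T v b = c b * v (ι b)) (hc : ∀ b, c b ≠ 0) :
    LinearMap.ker T = Finsupp.supported K K (Set.range ι)ᶜ := by
  ext v
  simp only [LinearMap.mem_ker, Finsupp.mem_supported', Set.mem_compl_iff, Set.mem_range,
    not_exists, not_forall, not_not, Finsupp.ext_iff, hT, Finsupp.coe_zero, Pi.zero_apply,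
    mul_eq_zero, hc, false_or]
  exact ⟨fun h a ⟨b, hb⟩ => hb ▸ h b, fun h b => h (ι b) ⟨b, rfl⟩⟩

end DiagonalRestriction

theorem finrank_supported {R α : Type*} [Ring R] [StrongRankCondition R] (s : Set α) [Finite s] :
    Module.finrank R (Finsupp.supported R R s) = Nat.card s := by
  have := Fintype.ofFinite s
  rw [(Finsupp.supportedEquivFinsupp s).finrank_eq, Module.finrank_finsupp_self,
    Nat.card_eq_fintype_card]

theorem qint_pos {q : ℝ} (hq0 : 0 < q) (hq1 : q < 1) {n : ℤ} (hn : 0 < n) : 0 < qint q n := by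
  have hpow : q ^ n < q ^ (-n) := zpow_lt_zpow_right_of_lt_one₀ hq0 hq1 (by omega)
  have hinv : q < q⁻¹ := hq1.trans (one_lt_inv₀ hq0 |>.mpr hq1)
  exact div_pos_of_neg_of_neg (by linarith) (by linarith)

section IndexSets

variable {N : ℤ}

theorem mem_SN_iff {p : ℤ × ℤ} :
    p ∈ SN N ↔ |N| ≤ p.1 ∧ p.1 % 2 = N % 2 ∧ |p.2| ≤ p.1 ∧ p.2 % 2 = p.1 % 2 :=
  Iff.rfl

theorem SN_sub_two_subset (hN : N ≤ 1) : SN (N - 2) ⊆ SN N := by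
  intro p hp
  simp only [mem_SN_iff, abs_le] at *
  omega

theorem mem_SN_sub_two_iff {p : ℤ × ℤ} (hp : p ∈ SN N) :
    p ∈ SN (N - 2) ↔ p.1 ≠ -N := by
  simp only [mem_SN_iff, abs_le] at *
  omega

theorem coeffT_pos {q : ℝ} (hq0 : 0 < q) (hq1 : q < 1) (hN : N ≤ 1) {p : ℤ × ℤ}
    (hp : p ∈ SN (N - 2)) : 0 < coeffT q N p := by
  simp only [mem_SN_iff, abs_le] at hp
  exact Real.sqrt_pos.mpr (mul_pos (qint_pos hq0 hq1 (by omega)) (qint_pos hq0 hq1 (by omega)))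

/-- For `N > 0` both sides are empty, `(1 - N).toNat` being `0`. -/
def bottomRowEquiv (N : ℤ) : {p : SN N | (p : ℤ × ℤ).1 = -N} ≃ Fin (1 - N).toNat where
  toFun p := ⟨((p : SN N).1.2 - N).toNat / 2, by
    obtain ⟨⟨⟨a, b⟩, hp⟩, ha⟩ := p
    simp only [mem_SN_iff, abs_le] at hp
    simp only [Set.mem_ofPred_eq] at ha hp ⊢
    omega⟩
  invFun k := ⟨⟨(-N, N + 2 * (k : ℤ)), by
    have hk := k.isLt
    simp only [mem_SN_iff, abs_le]
    omega⟩, rfl⟩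
  left_inv p := by
    obtain ⟨⟨⟨a, b⟩, hp⟩, ha⟩ := p
    simp only [mem_SN_iff, abs_le] at hp
    simp only [Set.mem_ofPred_eq] at ha hp
    ext <;> simp only <;> omega
  right_inv k := by
    ext
    simp only
    omega

end IndexSets

section DolbeaultOperator

variable {q : ℝ} {N : ℤ}

open Classical in
theorem TN_single (p : SN N) (x : ℂ) :
    TN q N (Finsupp.single p x) =
      if h : (p : ℤ × ℤ) ∈ SN (N - 2) then Finsupp.single ⟨p, h⟩ ((coeffT q N p : ℂ) * x)
      else 0 := by
  split_ifs with h <;> simp [TN, h]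

theorem TN_apply (hN : N ≤ 1) (v : VN N) (p : SN (N - 2)) :
    TN q N v p = (coeffT q N p : ℂ) * v (Set.inclusion (SN_sub_two_subset hN) p) := by
  induction v using Finsupp.induction_linear with
  | zero => simp
  | add v w hv hw => simp only [map_add, Finsupp.add_apply, hv, hw, mul_add]
  | single p' x =>
    rw [TN_single]
    split_ifs with h
    · simp only [Finsupp.single_apply, Subtype.ext_iff]
      split_ifs with he
      · rw [he]
      · rw [mul_zero]
    · have hne : p' ≠ Set.inclusion (SN_sub_two_subset hN) p := fun he => h (he ▸ p.2)
      rw [Finsupp.single_eq_of_ne' hne, mul_zero, Finsupp.coe_zero, Pi.zero_apply]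

theorem surjective_TN (hq0 : 0 < q) (hq1 : q < 1) (hN : N ≤ 1) : Surjective (TN q N) :=
  LinearMap.surjective_of_apply_eq_mul_comp (TN_apply hN) (Set.inclusion_injective _)
    fun p => Complex.ofReal_ne_zero.mpr (coeffT_pos hq0 hq1 hN p.2).ne'

theorem ker_TN (hq0 : 0 < q) (hq1 : q < 1) (hN : N ≤ 1) :
    LinearMap.ker (TN q N) = Finsupp.supported ℂ ℂ {p : SN N | (p : ℤ × ℤ).1 = -N} := by
  rw [LinearMap.ker_eq_supported_compl_range_of_apply_eq_mul_comp (TN_apply hN)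
    fun p => Complex.ofReal_ne_zero.mpr (coeffT_pos hq0 hq1 hN p.2).ne', Set.range_inclusion]
  congr 1
  ext p
  simp [mem_SN_sub_two_iff p.2]

end DolbeaultOperator

/-- for `0 < q < 1` and an integer `N ≤ 0`, the map `T_N : V_N → V_{N-2}` is
surjective, and its kernel is spanned by the basis vectors `e_{a,b}` with `a = -N` and
has `ℂ`-dimension `1 - N = |N| + 1`. -/
theorem stmt9 (q : ℝ) (hq0 : 0 < q) (hq1 : q < 1) (N : ℤ) (hN : N ≤ 0) :
    Function.Surjective (TN q N) ∧
    LinearMap.ker (TN q N) =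
      Submodule.span ℂ
        {v : VN N | ∃ p : SN N, (p : ℤ × ℤ).1 = -N ∧ v = Finsupp.single p 1} ∧
    Module.finrank ℂ (LinearMap.ker (TN q N)) = (1 - N).toNat := by
  have hN1 : N ≤ 1 := hN.trans zero_le_one
  have := Finite.of_equiv _ (bottomRowEquiv N).symm
  refine ⟨surjective_TN hq0 hq1 hN1, ?_, ?_⟩
  · rw [ker_TN hq0 hq1 hN1, Finsupp.supported_eq_span_single]
    congr 1
    ext v
    simp only [Set.mem_image, Set.mem_ofPred_eq, eq_comm]
  · rw [ker_TN hq0 hq1 hN1, finrank_supported, Nat.card_congr (bottomRowEquiv N), Nat.card_fin]
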